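/- Let $s,t \in \mathbb{R}_{\ge 0}^4$ satisfy $s_1 t_2 t_3 s_4 = t_1 s_2 s_3 t_4$. Then $A(s,t) := \inf_{r>0} \left[\sqrt{(s_1 r^{-1}+t_4 r)(s_4 r^{-1}+t_1 r)} + \sqrt{(s_2 r^{-1}+t_3 r)(s_3 r^{-1}+t_2 r)}\right] = \sum_{i=1}^4 \sqrt{s_i t_i}$. -/

import Mathlib

open Real

noncomputable def Afun (s t : Fin 4 → ℝ) : ℝ :=
  sInf {x : ℝ | ∃ r : ℝ, 0 < r ∧
    x = Real.sqrt ((s 0 / r + t 3 * r) * (s 3 / r + t 0 * r)) +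
        Real.sqrt ((s 1 / r + t 2 * r) * (s 2 / r + t 1 * r))}

/-!
Expanding the product gives the two-term Lagrange identity
`(p/r + v r)(u/r + q r) = (√(pq) + √(uv))² + (√(pu)/r - √(vq) r)²`, so each square root in `Afun`
lies between `√(pq) + √(uv)` and that value plus `|√(pu)/r - √(vq) r|`. The hypothesis
`s₀ t₁ t₂ s₃ = t₀ s₁ s₂ t₃` says that the two error terms `a/r - b r` and `a'/r - b' r` come from
proportional vectors `(a, b)` and `(a', b')`, so one choice of `r` makes both vanish, or both
arbitrarily small when the common direction is a coordinate axis.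
-/

section SqrtBounds

variable {p u q v r : ℝ}

theorem div_add_mul_mul_div_add_mul_eq (hp : 0 ≤ p) (hu : 0 ≤ u) (hq : 0 ≤ q) (hv : 0 ≤ v)
    (hr : r ≠ 0) :
    (p / r + v * r) * (u / r + q * r) =
      (√(p * q) + √(u * v)) ^ 2 + (√(p * u) / r - √(v * q) * r) ^ 2 := by
  have hcross : √(p * q) * √(u * v) = √(p * u) * √(v * q) := by
    rw [← sqrt_mul (by positivity), ← sqrt_mul (by positivity)]
    ring_nf
  rw [add_sq, sub_sq, div_pow, mul_pow, mul_assoc 2, hcross, sq_sqrt (mul_nonneg hp hq),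
    sq_sqrt (mul_nonneg hu hv), sq_sqrt (mul_nonneg hp hu), sq_sqrt (mul_nonneg hv hq)]
  field_simp
  ring

theorem sqrt_mul_add_sqrt_mul_le (hp : 0 ≤ p) (hu : 0 ≤ u) (hq : 0 ≤ q) (hv : 0 ≤ v)
    (hr : 0 < r) :
    √(p * q) + √(u * v) ≤ √((p / r + v * r) * (u / r + q * r)) := by
  rw [div_add_mul_mul_div_add_mul_eq hp hu hq hv hr.ne']
  exact le_sqrt_of_sq_le (le_add_of_nonneg_right (sq_nonneg _))

theorem sqrt_le_sqrt_mul_add_sqrt_mul_add_abs (hp : 0 ≤ p) (hu : 0 ≤ u) (hq : 0 ≤ q)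
    (hv : 0 ≤ v) (hr : 0 < r) :
    √((p / r + v * r) * (u / r + q * r)) ≤
      √(p * q) + √(u * v) + |√(p * u) / r - √(v * q) * r| := by
  rw [div_add_mul_mul_div_add_mul_eq hp hu hq hv hr.ne']
  set X := √(p * q) + √(u * v)
  set Y := √(p * u) / r - √(v * q) * r
  have hX : 0 ≤ X := by positivity
  rw [sqrt_le_iff]
  exact ⟨by positivity, by nlinarith [sq_abs Y, abs_nonneg Y]⟩

end SqrtBounds

theorem exists_pos_abs_div_sub_mul_add_abs_lt {a b a' b' ε : ℝ} (ha : 0 ≤ a) (hb : 0 ≤ b)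
    (ha' : 0 ≤ a') (hb' : 0 ≤ b') (h : a * b' = a' * b) (hε : 0 < ε) :
    ∃ r > 0, |a / r - b * r| + |a' / r - b' * r| < ε := by
  rcases (add_nonneg hb hb').eq_or_lt with hd | hd
  · obtain ⟨rfl, rfl⟩ : b = 0 ∧ b' = 0 := ⟨by linarith, by linarith⟩
    refine ⟨(a + a' + 1) / ε, by positivity, ?_⟩
    simp only [zero_mul, sub_zero]
    rw [abs_of_nonneg (by positivity), abs_of_nonneg (by positivity), ← add_div,
      div_lt_iff₀ (by positivity)]
    field_simp
    linarith
  rcases (add_nonneg ha ha').eq_or_lt with hc | hc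
  · obtain ⟨rfl, rfl⟩ : a = 0 ∧ a' = 0 := ⟨by linarith, by linarith⟩
    refine ⟨ε / (b + b' + 1), by positivity, ?_⟩
    simp only [zero_div, zero_sub, abs_neg]
    rw [abs_of_nonneg (by positivity), abs_of_nonneg (by positivity), ← add_mul,
      mul_div_assoc', div_lt_iff₀ (by positivity)]
    nlinarith
  · -- `(a, b)` and `(a', b')` are both proportional to `(a + a', b + b')`
    set r := √((a + a') / (b + b'))
    have hr : 0 < r := sqrt_pos.2 (div_pos hc hd)
    have hr2 : r ^ 2 = (a + a') / (b + b') := sq_sqrt (div_pos hc hd).le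
    have hzero : ∀ x y, x * (b + b') = y * (a + a') → x / r - y * r = 0 := by
      intro x y hxy
      rw [sub_eq_zero, div_eq_iff hr.ne', mul_assoc, ← sq, hr2, mul_div_assoc', eq_div_iff hd.ne']
      exact hxy
    refine ⟨r, hr, ?_⟩
    rw [hzero a b (by linear_combination h), hzero a' b' (by linear_combination -h)]
    simpa using hε

theorem stmt_1 (s t : Fin 4 → ℝ) (hs : ∀ i, 0 ≤ s i) (ht : ∀ i, 0 ≤ t i)
    (h : s 0 * t 1 * t 2 * s 3 = t 0 * s 1 * s 2 * t 3) :
    Afun s t = ∑ i : Fin 4, Real.sqrt (s i * t i) := by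
  rw [Fin.sum_univ_four]
  refine csInf_eq_of_forall_ge_of_forall_gt_exists_lt ⟨_, 1, one_pos, rfl⟩ ?_ ?_
  · rintro _ ⟨r, hr, rfl⟩
    linarith [sqrt_mul_add_sqrt_mul_le (hs 0) (hs 3) (ht 0) (ht 3) hr,
      sqrt_mul_add_sqrt_mul_le (hs 1) (hs 2) (ht 1) (ht 2) hr]
  · intro w hw
    have hprop : √(s 0 * s 3) * √(t 2 * t 1) = √(s 1 * s 2) * √(t 3 * t 0) := by
      rw [← sqrt_mul (mul_nonneg (hs 0) (hs 3)), ← sqrt_mul (mul_nonneg (hs 1) (hs 2))]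
      congr 1
      linear_combination h
    obtain ⟨r, hr, hsmall⟩ := exists_pos_abs_div_sub_mul_add_abs_lt (sqrt_nonneg _)
      (sqrt_nonneg _) (sqrt_nonneg _) (sqrt_nonneg _) hprop (sub_pos.2 hw)
    refine ⟨_, ⟨r, hr, rfl⟩, ?_⟩
    linarith [sqrt_le_sqrt_mul_add_sqrt_mul_add_abs (hs 0) (hs 3) (ht 0) (ht 3) hr,
      sqrt_le_sqrt_mul_add_sqrt_mul_add_abs (hs 1) (hs 2) (ht 1) (ht 2) hr]
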